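/- arXiv:0810.0693 — 2 statements merged into one kernel-verified Lean document; each statement's English description precedes it below -/
import Mathlib

section
/- Let G = (Q, A, R, π) be a nonadaptive-query single-prover r-round game with r ≥ 2, let G' be its oracularization, and let θ' be a no-signaling strategy of G'. For q ∈ Q^r and k ∈ {1,...,r}, let ε_cons(q,k) = Σ_{a∈A^r, a'∈A^k : a_{[1,k]} ≠ a'} θ'(a, a' | q, q_{[1,k]}), and let β_{q_{[1,k]}}(a') = Σ_{a∈A^r} θ'(a, a' | q, q_{[1,k]}) (which depends only on q_{[1,k]} by the no-signaling condition). For each k define θ^(k)(a_k | q_{[1,k]}, a_{[1,k-1]}) = β_{q_{[1,k]}}(a_{[1,k]}) / Σ_{a∈A} β_{q_{[1,k]}}((a_{[1,k-1]}, a)) whenever the denominator is positive (for k = 1 the denominator is taken to be 1), and an arbitrary probability distribution on A when it is zero; and define the distribution h^⟨k⟩_q on A^r by h^⟨k⟩_q(a) = β_{q_{[1,k]}}(a_{[1,k]}) ∏_{i=k+1}^r θ^(i)(a_i | q_{[1,i]}, a_{[1,i-1]}). Then for every q ∈ Q^r and every k with 2 ≤ k ≤ r, SD(h^⟨k-1⟩_q,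 h^⟨k⟩_q) ≤ ε_cons(q, k−1) + ε_cons(q, k). -/
attribute [local instance] Classical.propDecidable

noncomputable section

/-- Statistical difference between two functions on a finite set. -/
def statDiff {S : Type*} [Fintype S] (p q : S → ℝ) : ℝ :=
  (1 / 2) * ∑ s, |p s - q s|

/-- The length-`k` prefix of a tuple indexed by `Fin r` (with junk values in positions `≥ r`,
which are never used when `k ≤ r`). -/
def pref {X : Type*} [Nonempty X] {r : ℕ} (x : Fin r → X) (k : ℕ) : Fin k → X :=
  fun i => if h : (i : ℕ) < r then x ⟨i, h⟩ else Classical.arbitrary X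

/-- The first `k` coordinates of `a : Fin r → A` coincide with `a' : Fin k → A`. -/
def consistentPrefix {A : Type*} (r k : ℕ) (a : Fin r → A) (a' : Fin k → A) : Prop :=
  ∀ i : Fin k, ∀ h : (i : ℕ) < r, a ⟨i, h⟩ = a' i

/-- `θ'` is a no-signaling strategy of the oracularization of an `r`-round game. -/
def IsNoSignalingStrategy {Q A : Type*} [Fintype Q] [Fintype A] [Nonempty Q] [Nonempty A]
    (r : ℕ)
    (θ' : (Fin r → Q) → (k : ℕ) → (Fin r → A) → (Fin k → A) → ℝ) : Prop :=
  (∀ q k, 1 ≤ k → k ≤ r → ∀ a a', 0 ≤ θ' q k a a') ∧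
  (∀ q k, 1 ≤ k → k ≤ r → (∑ a : Fin r → A, ∑ a' : Fin k → A, θ' q k a a') = 1) ∧
  (∀ q k k', 1 ≤ k → k ≤ r → 1 ≤ k' → k' ≤ r → ∀ a : Fin r → A,
    (∑ a' : Fin k → A, θ' q k a a') = ∑ a' : Fin k' → A, θ' q k' a a') ∧
  (∀ q q' k, 1 ≤ k → k ≤ r → pref q k = pref q' k →
    ∀ a' : Fin k → A, (∑ a : Fin r → A, θ' q k a a') = ∑ a : Fin r → A, θ' q' k a a')

/-- `ε_cons(q, k)`: the probability that the strategy `θ'` fails the Consistency Test,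
conditioned on the first prover being asked `q` and the second prover `q_{[1,k]}`. -/
def consFail {Q A : Type*} [Fintype Q] [Fintype A] (r : ℕ)
    (θ' : (Fin r → Q) → (k : ℕ) → (Fin r → A) → (Fin k → A) → ℝ)
    (q : Fin r → Q) (k : ℕ) : ℝ :=
  ∑ a : Fin r → A, ∑ a' : Fin k → A,
    if consistentPrefix r k a a' then 0 else θ' q k a a'

/-- `β_{q_{[1,k]}}(a') = Σ_{a ∈ A^r} θ'(a, a' | q, q_{[1,k]})`: the distribution of the second
prover's answer (which depends only on `q_{[1,k]}`, by the no-signaling condition). -/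
def betaNS {Q A : Type*} [Fintype Q] [Fintype A] (r : ℕ)
    (θ' : (Fin r → Q) → (k : ℕ) → (Fin r → A) → (Fin k → A) → ℝ)
    (q : Fin r → Q) (k : ℕ) (a' : Fin k → A) : ℝ :=
  ∑ a : Fin r → A, θ' q k a a'

/-- The hybrid distribution `h^⟨k⟩_q` on `A^r`:
`h^⟨k⟩_q(a) = β_{q_{[1,k]}}(a_{[1,k]}) ∏_{i=k+1}^{r} θ^(i)(a_i | q_{[1,i]}, a_{[1,i-1]})`,
where `θc q j pre a` stands for `θ^(j+1)(a | q_{[1,j+1]}, pre)`. -/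
def hybridNS {Q A : Type*} [Fintype Q] [Fintype A] [Nonempty Q] [Nonempty A] (r : ℕ)
    (θ' : (Fin r → Q) → (k : ℕ) → (Fin r → A) → (Fin k → A) → ℝ)
    (θc : (Fin r → Q) → (j : ℕ) → (Fin j → A) → A → ℝ)
    (q : Fin r → Q) (k : ℕ) (a : Fin r → A) : ℝ :=
  betaNS r θ' q k (pref a k) *
    ∏ j ∈ Finset.Ico k r, (if h : j < r then θc q j (pref a j) (a ⟨j, h⟩) else 1)

/-- `θc` gives the conditional probabilities obtained from the marginals `β`:
`θ^(k)(a_k | q_{[1,k]}, a_{[1,k-1]}) = β_{q_{[1,k]}}(a_{[1,k]})/Σ_a β_{q_{[1,k]}}(a_{[1,k-1]},a)`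
whenever the denominator is positive, and an arbitrary distribution where it vanishes. -/
def IsConditional {Q A : Type*} [Fintype Q] [Fintype A] (r : ℕ)
    (θ' : (Fin r → Q) → (k : ℕ) → (Fin r → A) → (Fin k → A) → ℝ)
    (θc : (Fin r → Q) → (j : ℕ) → (Fin j → A) → A → ℝ) : Prop :=
  (∀ q j, j + 1 ≤ r → ∀ pre : Fin j → A,
    (∀ a, 0 ≤ θc q j pre a) ∧ (∑ a, θc q j pre a) = 1) ∧
  (∀ q j, j + 1 ≤ r → ∀ pre : Fin j → A,
    0 < (∑ b, betaNS r θ' q (j + 1) (Fin.snoc pre b)) →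
    ∀ a, θc q j pre a =
      betaNS r θ' q (j + 1) (Fin.snoc pre a) /
        ∑ b, betaNS r θ' q (j + 1) (Fin.snoc pre b))

/-!
The two hybrids share the tail of conditionals `θ^(i)`, `i > k + 1`, which sum to one and hence
drop out of the statistical difference. What remains compares `β_k(u) θ^(k+1)(b | u)` with
`β_{k+1}(u, b)`; as `θ^(k+1)(· | u)` is the conditional law of `β_{k+1}` given the prefix `u`,
their ℓ¹-distance is exactly the one between `β_k` and the `A^k`-marginal of `β_{k+1}`.
Both are compared with the law of the prefix of the first prover's answer, which by
no-signaling does not depend on `k`: the second prover's answer agrees with that prefix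
except with probability `ε_cons`, so each of the two distances is at most `2 ε_cons`.
-/

section Prefix

variable {A : Type*} [Nonempty A]

theorem pref_apply {r m : ℕ} (a : Fin r → A) (i : Fin m) (h : (i : ℕ) < r) :
    pref a m i = a ⟨i, h⟩ :=
  dif_pos h

theorem pref_self {r : ℕ} (a : Fin r → A) : pref a r = a :=
  funext fun i => pref_apply a i i.isLt

theorem pref_pref {r m n : ℕ} (a : Fin r → A) (hmn : m ≤ n) (hn : n ≤ r) :
    pref (pref a n) m = pref a m := by
  funext i
  have hin : (i : ℕ) < n := i.isLt.trans_le hmn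
  rw [pref_apply _ i hin]
  exact (pref_apply a ⟨i, hin⟩ (hin.trans_le hn)).trans (pref_apply a i (hin.trans_le hn)).symm

theorem pref_snoc {m : ℕ} (u : Fin m → A) (b : A) :
    pref (Fin.snoc u b : Fin (m + 1) → A) m = u := by
  funext i
  rw [pref_apply _ i (Nat.lt_succ_of_lt i.isLt)]
  exact Fin.snoc_castSucc (α := fun _ => A) ..

theorem pref_succ {r m : ℕ} (a : Fin r → A) (h : m < r) :
    pref a (m + 1) = Fin.snoc (pref a m) (a ⟨m, h⟩) := by
  funext i
  refine Fin.lastCases ?_ (fun j => ?_) i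
  · rw [Fin.snoc_last]
    exact pref_apply a (Fin.last m) h
  · rw [Fin.snoc_castSucc, pref_apply a j (j.isLt.trans h)]
    exact pref_apply a j.castSucc (j.isLt.trans h)

theorem consistentPrefix_iff {r m : ℕ} (hmr : m ≤ r) (a : Fin r → A) (a' : Fin m → A) :
    consistentPrefix r m a a' ↔ pref a m = a' := by
  refine ⟨fun h => funext fun i => ?_, fun h i hi => ?_⟩
  · rw [pref_apply a i (i.isLt.trans_le hmr)]
    exact h i _
  · rw [← h, pref_apply a i hi]

end Prefix

section SnocSums

variable {A : Type*} [Fintype A] {m : ℕ}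

theorem sum_snoc {M : Type*} [AddCommMonoid M] (f : (Fin (m + 1) → A) → M) :
    ∑ w, f w = ∑ u : Fin m → A, ∑ b, f (Fin.snoc u b) := by
  rw [← (Fin.snocEquiv fun _ => A).sum_comp, Fintype.sum_prod_type, Finset.sum_comm]
  rfl

theorem sum_abs_sum_snoc_le (g : (Fin (m + 1) → A) → ℝ) :
    ∑ u : Fin m → A, |∑ b, g (Fin.snoc u b)| ≤ ∑ w, |g w| := by
  rw [sum_snoc]
  exact Finset.sum_le_sum fun u _ => Finset.abs_sum_le_sum_abs _ _

theorem sum_ite_pref_succ_eq_snoc [Nonempty A] {r : ℕ} (hm : m < r) (p : (Fin r → A) → ℝ)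
    (u : Fin m → A) :
    ∑ b, ∑ a, (if pref a (m + 1) = Fin.snoc u b then p a else 0) =
      ∑ a, if pref a m = u then p a else 0 := by
  rw [Finset.sum_comm]
  refine Finset.sum_congr rfl fun a _ => ?_
  simp_rw [pref_succ a hm, Fin.snoc_inj, ite_and]
  by_cases hu : pref a m = u <;> simp [hu]

end SnocSums

/-- If `X` is coupled with `Y` by `p`, the laws of `Y` and of `f X` are `2 P(f X ≠ Y)`-close
in ℓ¹. -/
theorem sum_abs_sub_fiberwise_le {X Y : Type*} [Fintype X] [Fintype Y] [DecidableEq Y]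
    (p : X → Y → ℝ) (hp : ∀ x y, 0 ≤ p x y) (f : X → Y) :
    ∑ y, |∑ x, p x y - ∑ x, if f x = y then ∑ y', p x y' else 0| ≤
      2 * ∑ x, ∑ y, if f x = y then 0 else p x y := by
  set d : X → Y → ℝ := fun x y => if f x = y then 0 else p x y with hd
  have hd0 : ∀ x y, 0 ≤ d x y := fun x y => by
    simp only [hd]; split_ifs <;> simp [hp]
  -- The diagonal `y = f x` cancels, so only the defect `d` remains.
  have hcancel : ∀ x y, (p x y - if f x = y then ∑ y', p x y' else 0) =
      d x y - if f x = y then ∑ y', d x y' else 0 := by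
    intro x y
    have hsum : ∑ y', d x y' = ∑ y', p x y' - p x (f x) := by
      have hd' : ∀ y', d x y' = p x y' - if f x = y' then p x y' else 0 := fun y' => by
        simp only [hd]; split_ifs <;> simp
      rw [Finset.sum_congr rfl fun y' _ => hd' y', Finset.sum_sub_distrib, Finset.sum_ite_eq]
      simp
    by_cases h : f x = y
    · subst h
      rw [if_pos rfl, if_pos rfl, hsum]
      simp only [hd, if_pos rfl]
      ring
    · simp [h, hd]
  calc ∑ y, |∑ x, p x y - ∑ x, if f x = y then ∑ y', p x y' else 0|
      = ∑ y, |∑ x, d x y - ∑ x, if f x = y then ∑ y', d x y' else 0| := by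
        refine Finset.sum_congr rfl fun y _ => ?_
        rw [← Finset.sum_sub_distrib, ← Finset.sum_sub_distrib]
        exact congrArg abs (Finset.sum_congr rfl fun x _ => hcancel x y)
    _ ≤ ∑ y, (∑ x, d x y + ∑ x, if f x = y then ∑ y', d x y' else 0) := by
        refine Finset.sum_le_sum fun y _ => (abs_sub _ _).trans ?_
        rw [abs_of_nonneg (Finset.sum_nonneg fun x _ => hd0 x y),
          abs_of_nonneg (Finset.sum_nonneg fun x _ => by
            split_ifs
            exacts [Finset.sum_nonneg fun y' _ => hd0 x y', le_rfl])]
    _ = 2 * ∑ x, ∑ y, d x y := by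
        rw [Finset.sum_add_distrib, Finset.sum_comm (f := fun y x => d x y),
          Finset.sum_comm (f := fun y x => if f x = y then ∑ y', d x y' else 0)]
        simp only [Finset.sum_ite_eq, Finset.mem_univ, if_true]
        ring

theorem sum_abs_mul_sub_eq_abs_sub_sum {B : Type*} [Fintype B] {x : ℝ} {c p : B → ℝ}
    (hx : 0 ≤ x) (hc : ∀ b, 0 ≤ c b) (hc1 : ∑ b, c b = 1) (hp : ∀ b, 0 ≤ p b)
    (hcp : 0 < ∑ b, p b → ∀ b, c b = p b / ∑ b', p b') :
    ∑ b, |x * c b - p b| = |x - ∑ b, p b| := by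
  rcases (Finset.sum_nonneg fun b _ => hp b).lt_or_eq with hpos | hzero
  · have hterm : ∀ b, |x * c b - p b| = p b * (|x - ∑ b', p b'| / ∑ b', p b') := by
      intro b
      have hfactor :
          x * (p b / ∑ b', p b') - p b = p b * ((x - ∑ b', p b') / ∑ b', p b') := by
        field_simp
      rw [hcp hpos b, hfactor, abs_mul, abs_div, abs_of_nonneg (hp b), abs_of_pos hpos]
    rw [Finset.sum_congr rfl fun b _ => hterm b, ← Finset.sum_mul, mul_div_cancel₀ _ hpos.ne']
  · have hp0 : ∀ b, p b = 0 := fun b =>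
      (Finset.sum_eq_zero_iff_of_nonneg fun b _ => hp b).mp hzero.symm b (Finset.mem_univ b)
    simp only [hp0, sub_zero, Finset.sum_const_zero]
    rw [Finset.sum_congr rfl fun b _ => abs_of_nonneg (mul_nonneg hx (hc b)), ← Finset.mul_sum,
      hc1, mul_one, abs_of_nonneg hx]

section Hybrid

variable {Q A : Type*} [Nonempty A] {r : ℕ}
  {θ' : (Fin r → Q) → (k : ℕ) → (Fin r → A) → (Fin k → A) → ℝ}
  {θc : (Fin r → Q) → (j : ℕ) → (Fin j → A) → A → ℝ}

/-- `condTail θc q m a = ∏_{i=m+1}^{r} θ^(i)(a_i | q_{[1,i]}, a_{[1,i-1]})`, so that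
`h^⟨m⟩_q(a) = β_{q_{[1,m]}}(a_{[1,m]}) * condTail θc q m a`. -/
def condTail (θc : (Fin r → Q) → (j : ℕ) → (Fin j → A) → A → ℝ) (q : Fin r → Q)
    (m : ℕ) (a : Fin r → A) : ℝ :=
  ∏ j ∈ Finset.Ico m r, if h : j < r then θc q j (pref a j) (a ⟨j, h⟩) else 1

theorem condTail_of_lt (q : Fin r → Q) (a : Fin r → A) {m : ℕ} (hm : m < r) :
    condTail θc q m a = θc q m (pref a m) (a ⟨m, hm⟩) * condTail θc q (m + 1) a := by
  rw [condTail, Finset.prod_eq_prod_Ico_succ_bot hm, dif_pos hm]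
  rfl

theorem condTail_nonneg {q : Fin r → Q} (hθc : ∀ j < r, ∀ pre b, 0 ≤ θc q j pre b) (m : ℕ)
    (a : Fin r → A) :
    0 ≤ condTail θc q m a :=
  Finset.prod_nonneg fun j hj => by
    have hjr : j < r := (Finset.mem_Ico.mp hj).2
    rw [dif_pos hjr]
    exact hθc j hjr _ _

theorem sum_mul_condTail [Fintype A] {q : Fin r → Q}
    (hθc : ∀ j < r, ∀ pre : Fin j → A, ∑ b, θc q j pre b = 1) {m : ℕ} (hm : m ≤ r)
    (g : (Fin m → A) → ℝ) :
    ∑ a, g (pref a m) * condTail θc q m a = ∑ w, g w := by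
  obtain ⟨d, hd⟩ := Nat.exists_eq_add_of_le hm
  induction d generalizing m with
  | zero =>
    obtain rfl : m = r := hd.symm
    simp [condTail, pref_self]
  | succ d ih =>
    have hmr : m < r := by omega
    calc ∑ a, g (pref a m) * condTail θc q m a
        = ∑ a, (fun w : Fin (m + 1) → A => g (pref w m) * θc q m (pref w m) (w (Fin.last m)))
            (pref a (m + 1)) * condTail θc q (m + 1) a := by
          refine Finset.sum_congr rfl fun a _ => ?_
          simp only [condTail_of_lt q a hmr, pref_succ a hmr, pref_snoc, Fin.snoc_last]
          ring
      _ = ∑ w : Fin (m + 1) → A, g (pref w m) * θc q m (pref w m) (w (Fin.last m)) :=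
          ih hmr (fun w => g (pref w m) * θc q m (pref w m) (w (Fin.last m))) (by omega)
      _ = ∑ w, g w := by
          rw [sum_snoc]
          refine Finset.sum_congr rfl fun u _ => ?_
          simp only [pref_snoc, Fin.snoc_last, ← Finset.mul_sum, hθc m hmr u, mul_one]

theorem betaNS_nonneg [Fintype Q] [Fintype A] [Nonempty Q]
    (hθ' : IsNoSignalingStrategy r θ') (q : Fin r → Q) {m : ℕ} (hm : 1 ≤ m) (hmr : m ≤ r)
    (u : Fin m → A) : 0 ≤ betaNS r θ' q m u :=
  Finset.sum_nonneg fun a _ => hθ'.1 q m hm hmr a u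

theorem sum_abs_hybridNS_sub [Fintype Q] [Fintype A] [Nonempty Q]
    (hθ' : IsNoSignalingStrategy r θ') (hθc : IsConditional r θ' θc) (q : Fin r → Q)
    {k : ℕ} (hk : 1 ≤ k) (hkr : k + 1 ≤ r) :
    ∑ a, |hybridNS r θ' θc q k a - hybridNS r θ' θc q (k + 1) a| =
      ∑ u : Fin k → A, |betaNS r θ' q k u - ∑ b, betaNS r θ' q (k + 1) (Fin.snoc u b)| := by
  set g : (Fin (k + 1) → A) → ℝ := fun w =>
    |betaNS r θ' q k (pref w k) * θc q k (pref w k) (w (Fin.last k)) - betaNS r θ' q (k + 1) w|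
  have hpoint : ∀ a, |hybridNS r θ' θc q k a - hybridNS r θ' θc q (k + 1) a| =
      g (pref a (k + 1)) * condTail θc q (k + 1) a := by
    intro a
    change |betaNS r θ' q k (pref a k) * condTail θc q k a -
      betaNS r θ' q (k + 1) (pref a (k + 1)) * condTail θc q (k + 1) a| = _
    rw [condTail_of_lt q a hkr, ← mul_assoc, ← sub_mul, abs_mul,
      abs_of_nonneg (condTail_nonneg (fun j hj pre => (hθc.1 q j hj pre).1) _ a)]
    simp only [g, pref_succ a hkr, pref_snoc, Fin.snoc_last]
  calc ∑ a, |hybridNS r θ' θc q k a - hybridNS r θ' θc q (k + 1) a|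
      = ∑ a, g (pref a (k + 1)) * condTail θc q (k + 1) a :=
        Finset.sum_congr rfl fun a _ => hpoint a
    _ = ∑ w, g w := sum_mul_condTail (fun j hj pre => (hθc.1 q j hj pre).2) hkr g
    _ = ∑ u : Fin k → A, ∑ b, g (Fin.snoc u b) := sum_snoc g
    _ = _ := by
      refine Finset.sum_congr rfl fun u _ => ?_
      simp only [g, pref_snoc, Fin.snoc_last]
      exact sum_abs_mul_sub_eq_abs_sub_sum (betaNS_nonneg hθ' q hk (by omega) u)
        (hθc.1 q k hkr u).1 (hθc.1 q k hkr u).2 (fun b => betaNS_nonneg hθ' q (by omega) hkr _)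
        (hθc.2 q k hkr u)

/-- The law of the prefix `a_{[1,m]}` of the first prover's answer when the second prover is
asked `q_{[1,m]}`. -/
def prefixLaw [Fintype A] (θ' : (Fin r → Q) → (k : ℕ) → (Fin r → A) → (Fin k → A) → ℝ)
    (q : Fin r → Q) (m : ℕ) (u : Fin m → A) : ℝ :=
  ∑ a : Fin r → A, if pref a m = u then ∑ a' : Fin m → A, θ' q m a a' else 0

theorem sum_abs_betaNS_sub_prefixLaw_le [Fintype Q] [Fintype A] {q : Fin r → Q} {m : ℕ}
    (hmr : m ≤ r) (hθ' : ∀ a a', 0 ≤ θ' q m a a') :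
    ∑ u, |betaNS r θ' q m u - prefixLaw θ' q m u| ≤ 2 * consFail r θ' q m := by
  have h := sum_abs_sub_fiberwise_le (θ' q m) hθ' (pref · m)
  simp only [betaNS, prefixLaw, consFail, consistentPrefix_iff hmr]
  exact h

theorem prefixLaw_eq_sum_snoc [Fintype Q] [Fintype A] [Nonempty Q]
    (hθ' : IsNoSignalingStrategy r θ') (q : Fin r → Q) {k : ℕ} (hk : 1 ≤ k)
    (hkr : k + 1 ≤ r) (u : Fin k → A) :
    prefixLaw θ' q k u = ∑ b, prefixLaw θ' q (k + 1) (Fin.snoc u b) := by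
  simp only [prefixLaw, hθ'.2.2.1 q (k + 1) k (by omega) hkr hk (by omega)]
  exact (sum_ite_pref_succ_eq_snoc hkr _ u).symm

theorem sum_abs_betaNS_sub_sum_snoc_le [Fintype Q] [Fintype A] [Nonempty Q]
    (hθ' : IsNoSignalingStrategy r θ') (q : Fin r → Q) {k : ℕ} (hk : 1 ≤ k)
    (hkr : k + 1 ≤ r) :
    ∑ u : Fin k → A, |betaNS r θ' q k u - ∑ b, betaNS r θ' q (k + 1) (Fin.snoc u b)| ≤
      2 * consFail r θ' q k + 2 * consFail r θ' q (k + 1) := by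
  calc ∑ u : Fin k → A, |betaNS r θ' q k u - ∑ b, betaNS r θ' q (k + 1) (Fin.snoc u b)|
      ≤ ∑ u : Fin k → A, (|betaNS r θ' q k u - prefixLaw θ' q k u| + |∑ b,
          (prefixLaw θ' q (k + 1) (Fin.snoc u b) - betaNS r θ' q (k + 1) (Fin.snoc u b))|) :=
        Finset.sum_le_sum fun u _ => (abs_sub_le _ (prefixLaw θ' q k u) _).trans_eq <| by
          rw [prefixLaw_eq_sum_snoc hθ' q hk hkr u, ← Finset.sum_sub_distrib]
    _ = ∑ u : Fin k → A, |betaNS r θ' q k u - prefixLaw θ' q k u| +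
          ∑ u : Fin k → A, |∑ b, (prefixLaw θ' q (k + 1) (Fin.snoc u b) -
            betaNS r θ' q (k + 1) (Fin.snoc u b))| := Finset.sum_add_distrib
    _ ≤ 2 * consFail r θ' q k +
          ∑ w, |prefixLaw θ' q (k + 1) w - betaNS r θ' q (k + 1) w| :=
        add_le_add (sum_abs_betaNS_sub_prefixLaw_le (by omega) (hθ'.1 q k hk (by omega)))
          (sum_abs_sum_snoc_le fun w => prefixLaw θ' q (k + 1) w - betaNS r θ' q (k + 1) w)
    _ ≤ 2 * consFail r θ' q k + 2 * consFail r θ' q (k + 1) := by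
        simp_rw [abs_sub_comm (prefixLaw _ _ _ _)]
        gcongr
        exact sum_abs_betaNS_sub_prefixLaw_le hkr (hθ'.1 q (k + 1) (by omega) hkr)

end Hybrid

/-- Claim `hybrid`.  For a no-signaling strategy `θ'` of the oracularized
game and the associated hybrid distributions, for every `q` and every cutoff (`1 ≤ k`,
`k + 1 ≤ r`), `SD(h^⟨k⟩_q, h^⟨k+1⟩_q) ≤ ε_cons(q, k) + ε_cons(q, k+1)`. -/
theorem hybrid_statDiff_le_consFail
    {Q A : Type*} [Fintype Q] [Fintype A] [Nonempty Q] [Nonempty A]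
    (r : ℕ)
    (θ' : (Fin r → Q) → (k : ℕ) → (Fin r → A) → (Fin k → A) → ℝ)
    (hθ' : IsNoSignalingStrategy r θ')
    (θc : (Fin r → Q) → (j : ℕ) → (Fin j → A) → A → ℝ)
    (hθc : IsConditional r θ' θc)
    (q : Fin r → Q) (k : ℕ) (hk : 1 ≤ k) (hkr : k + 1 ≤ r) :
    statDiff (hybridNS r θ' θc q k) (hybridNS r θ' θc q (k + 1)) ≤
      consFail r θ' q k + consFail r θ' q (k + 1) := by
  rw [statDiff, sum_abs_hybridNS_sub hθ' hθc q hk hkr]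
  linarith [sum_abs_betaNS_sub_sum_snoc_le hθ' q hk hkr]

end
end

section
/- Let H be a complex Hilbert space, Ψ ∈ H a unit vector, and A a finite nonempty set. For i = 1, 2, 3 let {X_i^a}_{a∈A} and {Y_i^a}_{a∈A} be families of positive bounded operators on H with Σ_a (X_i^a)² = I and Σ_a (Y_i^a)² = I, and suppose that every X_i^a commutes with every Y_j^{a'} (for all i, j ∈ {1,2,3} and a, a' ∈ A). Then (1/2) Σ_{a_1,a_2,a_3∈A} | ‖X_1^{a_1} X_2^{a_2} X_3^{a_3} Ψ‖² − ‖Y_3^{a_3} Y_2^{a_2} Y_1^{a_1} Ψ‖² | ≤ Σ_{i=1}^3 D( (X_i^a Ψ)_{a}, (Y_i^a Ψ)_{a} ). -/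
/-!
Hybrid argument. The families `Y₃ ⋯ Y_{k+1} X₁ ⋯ X_k Ψ` (`k = 0, …, 3`), indexed by the outcomes
`(a₁, a₂, a₃)`, are unit vectors of `⊕ H` interpolating between `Y₃Y₂Y₁Ψ` and `X₁X₂X₃Ψ`.
Consecutive ones differ in round `k` only: moving `Y_k` past the `X`'s and erasing the common
rounds with `Σ_a (T^a)² = I` shows that their overlap is `Σ_a ⟨X_k^a Ψ, Y_k^a Ψ⟩`. The statistical
difference of two families is at most their distance `D` (Cauchy–Schwarz after factoring
`‖u_a‖² − ‖v_a‖²`, together with `Σ_a ‖u_a‖ ‖v_a‖ ≥ |⟨u, v⟩|`), and `D` satisfies the triangle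
inequality on unit vectors (`sin γ ≤ sin α + sin β` for the angles `arccos |⟨·,·⟩|`).
-/

open scoped ComplexInnerProductSpace

/-- `D(u, v) = √(1 − |⟨u, v⟩|²)` for families `(u_a)`, `(v_a)` of vectors, viewed as vectors of
the Hilbert space direct sum `⊕_{a} H` (whose inner product is `Σ_a ⟪u_a, v_a⟫`). -/
noncomputable def tdistFam {H : Type*} [NormedAddCommGroup H] [InnerProductSpace ℂ H]
    {S : Type*} [Fintype S] (u v : S → H) : ℝ :=
  Real.sqrt (1 - ‖∑ s, ⟪u s, v s⟫‖ ^ 2)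

section SineDistance

open scoped InnerProductSpace

variable {𝕜 E : Type*} [RCLike 𝕜] [NormedAddCommGroup E] [InnerProductSpace 𝕜 E]

theorem inner_eq_inner_sub_inner_smul_add {v : E} (hv : ‖v‖ = 1) (u w : E) :
    ⟪u, w⟫_𝕜 = ⟪u - ⟪v, u⟫_𝕜 • v, w - ⟪v, w⟫_𝕜 • v⟫_𝕜 + starRingEnd 𝕜 ⟪v, u⟫_𝕜 * ⟪v, w⟫_𝕜 := by
  simp only [inner_sub_left, inner_sub_right, inner_smul_left, inner_smul_right,
    inner_self_eq_norm_sq_to_K, hv, inner_conj_symm, RCLike.ofReal_one, one_pow, mul_one]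
  ring

theorem norm_sub_inner_smul_sq {v : E} (hv : ‖v‖ = 1) (u : E) :
    ‖u - ⟪v, u⟫_𝕜 • v‖ ^ 2 = ‖u‖ ^ 2 - ‖⟪v, u⟫_𝕜‖ ^ 2 := by
  rw [@norm_sub_sq 𝕜, inner_smul_right, ← inner_conj_symm, RCLike.conj_mul, norm_smul, hv]
  norm_cast
  rw [RCLike.norm_conj]
  ring

/-- `a, b, c` are the cosines and `sa, sb` the sines of angles `α, β, γ` with
`cos γ ≥ cos (α + β)`; then `sin γ ≤ sin α + sin β`. -/
theorem Real.sqrt_one_sub_sq_le_add {a b c sa sb : ℝ} (ha : 0 ≤ a) (hb : 0 ≤ b) (hc : 0 ≤ c)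
    (hsa : 0 ≤ sa) (hsb : 0 ≤ sb) (ha1 : a ^ 2 + sa ^ 2 = 1) (hb1 : b ^ 2 + sb ^ 2 = 1)
    (habc : a * b - sa * sb ≤ c) :
    √(1 - c ^ 2) ≤ sa + sb := by
  have ha1' : a ≤ 1 := by nlinarith
  have hb1' : b ≤ 1 := by nlinarith
  refine Real.sqrt_le_iff.mpr ⟨by positivity, ?_⟩
  rcases le_or_gt (a * b) (sa * sb) with h | h
  · nlinarith [mul_nonneg (sub_nonneg.mpr ha1') (sub_nonneg.mpr hb1'), mul_nonneg ha hb,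
      mul_nonneg ha (sub_nonneg.mpr ha1'), mul_nonneg hb (sub_nonneg.mpr hb1'), sq_nonneg c]
  · have hsin : (a * b - sa * sb) ^ 2 + (sa * b + a * sb) ^ 2 = 1 := by nlinarith
    have hle : sa * b + a * sb ≤ sa + sb := by
      nlinarith [mul_le_of_le_one_right hsa hb1', mul_le_of_le_one_left hsb ha1']
    nlinarith [mul_nonneg hsa hb, mul_nonneg ha hsb]

theorem sqrt_one_sub_norm_inner_sq_le_add {u v w : E} (hu : ‖u‖ = 1) (hv : ‖v‖ = 1)
    (hw : ‖w‖ = 1) :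
    √(1 - ‖⟪u, w⟫_𝕜‖ ^ 2) ≤ √(1 - ‖⟪u, v⟫_𝕜‖ ^ 2) + √(1 - ‖⟪v, w⟫_𝕜‖ ^ 2) := by
  set u' := u - ⟪v, u⟫_𝕜 • v
  set w' := w - ⟪v, w⟫_𝕜 • v
  have hu' : ‖⟪u, v⟫_𝕜‖ ^ 2 + ‖u'‖ ^ 2 = 1 := by
    rw [norm_sub_inner_smul_sq hv, hu, norm_inner_symm]; ring
  have hw' : ‖⟪v, w⟫_𝕜‖ ^ 2 + ‖w'‖ ^ 2 = 1 := by
    rw [norm_sub_inner_smul_sq hv, hw]; ring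
  have hcos : ‖⟪u, v⟫_𝕜‖ * ‖⟪v, w⟫_𝕜‖ ≤ ‖⟪u, w⟫_𝕜‖ + ‖u'‖ * ‖w'‖ :=
    calc ‖⟪u, v⟫_𝕜‖ * ‖⟪v, w⟫_𝕜‖ = ‖⟪u, w⟫_𝕜 - ⟪u', w'⟫_𝕜‖ := by
          rw [inner_eq_inner_sub_inner_smul_add hv u w, add_sub_cancel_left, norm_mul,
            RCLike.norm_conj, norm_inner_symm]
      _ ≤ ‖⟪u, w⟫_𝕜‖ + ‖⟪u', w'⟫_𝕜‖ := norm_sub_le _ _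
      _ ≤ ‖⟪u, w⟫_𝕜‖ + ‖u'‖ * ‖w'‖ := by gcongr; exact norm_inner_le_norm u' w'
  have hsu : √(1 - ‖⟪u, v⟫_𝕜‖ ^ 2) = ‖u'‖ := by
    rw [← hu', add_sub_cancel_left, Real.sqrt_sq (norm_nonneg _)]
  have hsw : √(1 - ‖⟪v, w⟫_𝕜‖ ^ 2) = ‖w'‖ := by
    rw [← hw', add_sub_cancel_left, Real.sqrt_sq (norm_nonneg _)]
  rw [hsu, hsw]
  exact Real.sqrt_one_sub_sq_le_add (norm_nonneg _) (norm_nonneg _) (norm_nonneg _)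
    (norm_nonneg _) (norm_nonneg _) hu' hw' (by linarith)

end SineDistance

theorem sq_sum_abs_sq_sub_sq_le {S : Type*} [Fintype S] {x y : S → ℝ}
    (hx : ∑ s, x s ^ 2 = 1) (hy : ∑ s, y s ^ 2 = 1) :
    (∑ s, |x s ^ 2 - y s ^ 2|) ^ 2 ≤ 4 * (1 - (∑ s, x s * y s) ^ 2) := by
  have hsub : ∑ s, |x s - y s| ^ 2 = 2 - 2 * ∑ s, x s * y s := by
    simp only [sq_abs, sub_sq, Finset.sum_add_distrib, Finset.sum_sub_distrib, hx, hy,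
      mul_assoc, ← Finset.mul_sum]
    ring
  have hadd : ∑ s, |x s + y s| ^ 2 = 2 + 2 * ∑ s, x s * y s := by
    simp only [sq_abs, add_sq, Finset.sum_add_distrib, hx, hy, mul_assoc, ← Finset.mul_sum]
    ring
  calc (∑ s, |x s ^ 2 - y s ^ 2|) ^ 2 = (∑ s, |x s - y s| * |x s + y s|) ^ 2 := by
        congr 1
        exact Finset.sum_congr rfl fun s _ => by rw [← abs_mul, sq_sub_sq, mul_comm]
    _ ≤ (∑ s, |x s - y s| ^ 2) * ∑ s, |x s + y s| ^ 2 := Finset.sum_mul_sq_le_sq_mul_sq _ _ _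
    _ = 4 * (1 - (∑ s, x s * y s) ^ 2) := by rw [hsub, hadd]; ring

section Families

variable {H : Type*} [NormedAddCommGroup H] {S : Type*} [Fintype S]

theorem norm_toLp_eq_one {u : S → H} (hu : ∑ s, ‖u s‖ ^ 2 = 1) :
    ‖(WithLp.toLp 2 u : PiLp 2 fun _ : S => H)‖ = 1 := by
  rw [← pow_eq_one_iff_of_nonneg (norm_nonneg _) two_ne_zero, PiLp.norm_sq_eq_of_L2]
  exact hu

variable [InnerProductSpace ℂ H]

theorem tdistFam_eq_sqrt_inner_toLp (u v : S → H) :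
    tdistFam u v = √(1 - ‖⟪WithLp.toLp 2 u, (WithLp.toLp 2 v : PiLp 2 fun _ : S => H)⟫‖ ^ 2) := by
  rw [tdistFam, PiLp.inner_apply]

theorem tdistFam_self {u : S → H} (hu : ∑ s, ‖u s‖ ^ 2 = 1) : tdistFam u u = 0 := by
  rw [tdistFam_eq_sqrt_inner_toLp, inner_self_eq_norm_sq_to_K, norm_toLp_eq_one hu]
  simp

theorem tdistFam_triangle {u v w : S → H} (hu : ∑ s, ‖u s‖ ^ 2 = 1) (hv : ∑ s, ‖v s‖ ^ 2 = 1)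
    (hw : ∑ s, ‖w s‖ ^ 2 = 1) : tdistFam u w ≤ tdistFam u v + tdistFam v w := by
  simp only [tdistFam_eq_sqrt_inner_toLp]
  exact sqrt_one_sub_norm_inner_sq_le_add (norm_toLp_eq_one hu) (norm_toLp_eq_one hv)
    (norm_toLp_eq_one hw)

theorem tdistFam_le_sum_succ {n : ℕ} {u : Fin (n + 1) → S → H}
    (hu : ∀ k, ∑ s, ‖u k s‖ ^ 2 = 1) :
    tdistFam (u (Fin.last n)) (u 0) ≤ ∑ k : Fin n, tdistFam (u k.succ) (u k.castSucc) := by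
  induction n with
  | zero => simp [tdistFam_self (hu 0)]
  | succ n ih =>
    rw [Fin.sum_univ_castSucc]
    calc tdistFam (u (Fin.last (n + 1))) (u 0)
        ≤ tdistFam (u (Fin.last (n + 1))) (u (Fin.last n).castSucc)
          + tdistFam (u (Fin.last n).castSucc) (u 0) := tdistFam_triangle (hu _) (hu _) (hu _)
      _ ≤ _ := by
        have := ih (u := fun k => u k.castSucc) fun k => hu _
        rw [add_comm, Fin.succ_last]
        exact add_le_add_left this _

theorem half_sum_abs_sub_le_tdistFam {u v : S → H} (hu : ∑ s, ‖u s‖ ^ 2 = 1)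
    (hv : ∑ s, ‖v s‖ ^ 2 = 1) :
    (1 / 2) * ∑ s, |‖u s‖ ^ 2 - ‖v s‖ ^ 2| ≤ tdistFam u v := by
  have hinner : ‖∑ s, ⟪u s, v s⟫‖ ≤ ∑ s, ‖u s‖ * ‖v s‖ :=
    (norm_sum_le _ _).trans (Finset.sum_le_sum fun s _ => norm_inner_le_norm _ _)
  have hfid := sq_sum_abs_sq_sub_sq_le hu hv
  rw [tdistFam]
  apply Real.le_sqrt_of_sq_le
  nlinarith [pow_le_pow_left₀ (norm_nonneg _) hinner 2]

end Families

section Measurement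

variable {H : Type*} [NormedAddCommGroup H] [InnerProductSpace ℂ H] {A : Type*} [Fintype A]

theorem sum_inner_apply_apply_eq_inner {T : A → H →L[ℂ] H} (hT : ∀ a, (T a).IsSymmetric)
    (hsum : ∑ a, T a ^ 2 = 1) (x y : H) : ∑ a, ⟪T a x, T a y⟫ = ⟪x, y⟫ :=
  calc ∑ a, ⟪T a x, T a y⟫ = ∑ a, ⟪x, (T a ^ 2) y⟫ :=
        Finset.sum_congr rfl fun a _ => hT a x (T a y)
    _ = ⟪x, y⟫ := by rw [← inner_sum, ← sum_apply, hsum]; rfl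

theorem sum_norm_apply_sq_eq {T : A → H → H} (hT : ∀ x y, ∑ a, ⟪T a x, T a y⟫ = ⟪x, y⟫)
    (x : H) : ∑ a, ‖T a x‖ ^ 2 = ‖x‖ ^ 2 := by
  have h := hT x x
  simp only [inner_self_eq_norm_sq_to_K] at h
  exact_mod_cast h

end Measurement

section Hybrid

variable {H : Type*} [NormedAddCommGroup H] [InnerProductSpace ℂ H] {A : Type*} [Fintype A]
  {X Y : Fin 3 → A → H →L[ℂ] H}

def hybrid (X Y : Fin 3 → A → H →L[ℂ] H) (Ψ : H) : Fin 4 → A × A × A → H :=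
  ![fun s => Y 2 s.2.2 (Y 1 s.2.1 (Y 0 s.1 Ψ)),
    fun s => Y 2 s.2.2 (Y 1 s.2.1 (X 0 s.1 Ψ)),
    fun s => Y 2 s.2.2 (X 0 s.1 (X 1 s.2.1 Ψ)),
    fun s => X 0 s.1 (X 1 s.2.1 (X 2 s.2.2 Ψ))]

theorem sum_norm_sq_hybrid (hX : ∀ i x y, ∑ a, ⟪X i a x, X i a y⟫ = ⟪x, y⟫)
    (hY : ∀ i x y, ∑ a, ⟪Y i a x, Y i a y⟫ = ⟪x, y⟫) (Ψ : H) (k : Fin 4) :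
    ∑ s, ‖hybrid X Y Ψ k s‖ ^ 2 = ‖Ψ‖ ^ 2 := by
  have hX' i := sum_norm_apply_sq_eq (hX i)
  have hY' i := sum_norm_apply_sq_eq (hY i)
  fin_cases k
  · simp [hybrid, Fintype.sum_prod_type, hY']
  · simp [hybrid, Fintype.sum_prod_type, hY', hX']
  · show ∑ s : A × A × A, ‖Y 2 s.2.2 (X 0 s.1 (X 1 s.2.1 Ψ))‖ ^ 2 = _
    simp only [Fintype.sum_prod_type, hY']
    rw [Finset.sum_comm]
    simp only [hX']
  · simp [hybrid, Fintype.sum_prod_type_right, hX']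

theorem sum_inner_hybrid_succ_castSucc (hX : ∀ i x y, ∑ a, ⟪X i a x, X i a y⟫ = ⟪x, y⟫)
    (hY : ∀ i x y, ∑ a, ⟪Y i a x, Y i a y⟫ = ⟪x, y⟫)
    (hcomm : ∀ i j a a', X i a * Y j a' = Y j a' * X i a) (Ψ : H) (k : Fin 3) :
    ∑ s, ⟪hybrid X Y Ψ k.succ s, hybrid X Y Ψ k.castSucc s⟫ = ∑ a, ⟪X k a Ψ, Y k a Ψ⟫ := by
  have hXY i j a a' x : X i a (Y j a' x) = Y j a' (X i a x) := DFunLike.congr_fun (hcomm i j a a') x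
  fin_cases k
  · simp [hybrid, Fintype.sum_prod_type, hY]
  · show ∑ s : A × A × A, ⟪Y 2 s.2.2 (X 0 s.1 (X 1 s.2.1 Ψ)), Y 2 s.2.2 (Y 1 s.2.1 (X 0 s.1 Ψ))⟫ =
      ∑ a, ⟪X 1 a Ψ, Y 1 a Ψ⟫
    simp only [Fintype.sum_prod_type, hY, ← hXY 0 1]
    rw [Finset.sum_comm]
    simp only [hX]
  · simp [hybrid, Fintype.sum_prod_type_right, hX, ← hXY]

end Hybrid

theorem threefold_exchange_bound_general {H : Type*} [NormedAddCommGroup H] [InnerProductSpace ℂ H]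
    {A : Type*} [Fintype A]
    (Ψ : H) (hΨ : ‖Ψ‖ = 1)
    (X Y : Fin 3 → A → (H →L[ℂ] H))
    (hXpos : ∀ i a, (X i a).IsPositive) (hYpos : ∀ i a, (Y i a).IsPositive)
    (hXsum : ∀ i, ∑ a, X i a ^ 2 = 1) (hYsum : ∀ i, ∑ a, Y i a ^ 2 = 1)
    (hcomm : ∀ i j a a', X i a * Y j a' = Y j a' * X i a) :
    (1 / 2) * ∑ a₁ : A, ∑ a₂ : A, ∑ a₃ : A,
        |‖(X 0 a₁) ((X 1 a₂) ((X 2 a₃) Ψ))‖ ^ 2 - ‖(Y 2 a₃) ((Y 1 a₂) ((Y 0 a₁) Ψ))‖ ^ 2|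
      ≤ ∑ i : Fin 3, tdistFam (fun a => (X i a) Ψ) (fun a => (Y i a) Ψ) := by
  have hX i := sum_inner_apply_apply_eq_inner (fun a => (hXpos i a).isSymmetric) (hXsum i)
  have hY i := sum_inner_apply_apply_eq_inner (fun a => (hYpos i a).isSymmetric) (hYsum i)
  have hunit k : ∑ s, ‖hybrid X Y Ψ k s‖ ^ 2 = 1 := by
    rw [sum_norm_sq_hybrid hX hY, hΨ, one_pow]
  calc _ = (1 / 2) * ∑ s, |‖hybrid X Y Ψ (Fin.last 3) s‖ ^ 2 - ‖hybrid X Y Ψ 0 s‖ ^ 2| := by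
        simp [hybrid, Fintype.sum_prod_type]
    _ ≤ tdistFam (hybrid X Y Ψ (Fin.last 3)) (hybrid X Y Ψ 0) :=
        half_sum_abs_sub_le_tdistFam (hunit _) (hunit _)
    _ ≤ ∑ k : Fin 3, tdistFam (hybrid X Y Ψ k.succ) (hybrid X Y Ψ k.castSucc) :=
        tdistFam_le_sum_succ hunit
    _ = _ := by simp only [tdistFam, sum_inner_hybrid_succ_castSucc hX hY hcomm]

/-- For commuting measurement square-root families `X_i`, `Y_i` (`i = 1,2,3`)
applied to a unit vector `Ψ`, the outcome distributions of `X_1 X_2 X_3` and `Y_3 Y_2 Y_1`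
differ by at most `Σ_i D((X_i^a Ψ)_a, (Y_i^a Ψ)_a)` in statistical difference. -/
theorem threefold_exchange_bound {H : Type*} [NormedAddCommGroup H] [InnerProductSpace ℂ H]
    [CompleteSpace H] {A : Type*} [Fintype A] [Nonempty A]
    (Ψ : H) (hΨ : ‖Ψ‖ = 1)
    (X Y : Fin 3 → A → (H →L[ℂ] H))
    (hXpos : ∀ i a, (X i a).IsPositive) (hYpos : ∀ i a, (Y i a).IsPositive)
    (hXsum : ∀ i, ∑ a, X i a ^ 2 = 1) (hYsum : ∀ i, ∑ a, Y i a ^ 2 = 1)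
    (hcomm : ∀ i j a a', X i a * Y j a' = Y j a' * X i a) :
    (1 / 2) * ∑ a₁ : A, ∑ a₂ : A, ∑ a₃ : A,
        |‖(X 0 a₁) ((X 1 a₂) ((X 2 a₃) Ψ))‖ ^ 2 - ‖(Y 2 a₃) ((Y 1 a₂) ((Y 0 a₁) Ψ))‖ ^ 2|
      ≤ ∑ i : Fin 3, tdistFam (fun a => (X i a) Ψ) (fun a => (Y i a) Ψ) :=
  threefold_exchange_bound_general Ψ hΨ X Y hXpos hYpos hXsum hYsum hcomm
end
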